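/- arXiv:1703.04102 — 5 statements merged into one kernel-verified Lean document; each statement's English description precedes it below -/
import Mathlib

section
/- Let A be a topologically independent subset of a precompact Hausdorff abelian topological group G. Then every continuous character χ : G → 𝕊 (where 𝕊 is the circle group) is finitely A-supported, i.e., the set supp_A(χ) = {a ∈ A : χ(a) ≠ 1} is finite. -/
/-!
If infinitely many `a i ∈ A` had `χ (a i) ≠ 1`, choose `m i` with `Re (χ (a i) ^ m i) ≤ 0`.
Precompactness gives two partial sums of `∑ m i • a i` whose difference `∑_{j ≤ i < k} m i • a i`
lies in any prescribed neighbourhood `U` of `0`; topological independence then forces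
`m j • a j` into `W = χ⁻¹ {Re > 0}`, contradicting the choice of `m j`.
-/

/-- A subset `A` of a topological abelian group is *topologically independent*. -/
def TopIndep {G : Type*} [AddCommGroup G] [TopologicalSpace G] (A : Set G) : Prop :=
  (0 : G) ∉ A ∧ ∀ W ∈ nhds (0 : G), ∃ U ∈ nhds (0 : G),
    ∀ B : Finset G, ↑B ⊆ A → ∀ z : G → ℤ,
      (∑ a ∈ B, z a • a) ∈ U → ∀ a ∈ B, z a • a ∈ W

open Filter Topology Uniformity

theorem Circle.exists_pow_re_nonpos {t : Circle} (ht : t ≠ 1) :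
    ∃ n : ℕ, ((t ^ n : Circle) : ℂ).re ≤ 0 := by
  set φ := |(t : ℂ).arg|
  have hφ : 0 < φ := abs_pos.2 (mt Circle.arg_eq_zero.1 ht)
  have hre (n : ℕ) : ((t ^ n : Circle) : ℂ).re = Real.cos (n * φ) := by
    rw [← Circle.exp_arg t, ← Circle.exp_natCast_mul, Circle.coe_exp,
      Complex.exp_ofReal_mul_I_re, ← Real.cos_abs, abs_mul, Nat.abs_cast]
  -- `n * φ` is the first multiple of `φ` past `π / 2`, so it overshoots by less than `φ ≤ π`.
  set n := ⌈Real.pi / 2 / φ⌉₊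
  have hlow : Real.pi / 2 ≤ n * φ := (div_le_iff₀ hφ).1 (Nat.le_ceil _)
  have hhigh : n * φ ≤ Real.pi + Real.pi / 2 := calc
    n * φ ≤ (Real.pi / 2 / φ + 1) * φ := by gcongr; exact (Nat.ceil_lt_add_one (by positivity)).le
    _ = φ + Real.pi / 2 := by field_simp; ring
    _ ≤ Real.pi + Real.pi / 2 := by gcongr; exact Complex.abs_arg_le_pi _
  exact ⟨n, hre n ▸ Real.cos_nonpos_of_pi_div_two_le_of_le hlow hhigh⟩

theorem TotallyBounded.exists_lt_mem_of_forall_mem {α : Type*} [UniformSpace α] {s : Set α}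
    (hs : TotallyBounded s) {V : SetRel α α} (hV : V ∈ 𝓤 α) {x : ℕ → α} (hx : ∀ n, x n ∈ s) :
    ∃ j k, j < k ∧ (x j, x k) ∈ V := by
  obtain ⟨W, hW, hWsymm, hWV⟩ := comp_symm_mem_uniformity_sets hV
  obtain ⟨t, ht, hst⟩ := hs W hW
  have hcover (n : ℕ) : ∃ c ∈ t, (x n, c) ∈ W := by simpa using hst (hx n)
  choose c hct hxc using hcover
  obtain ⟨j, k, hjk, hc⟩ := Set.Finite.exists_lt_map_eq_of_forall_mem hct ht
  exact ⟨j, k, hjk, hWV ⟨c j, hxc j, hc ▸ SetRel.symm W (hxc k)⟩⟩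

@[to_additive]
theorem exists_lt_div_mem_of_totallyBounded_univ {G : Type*} [Group G] [UniformSpace G]
    [IsUniformGroup G] (hG : TotallyBounded (Set.univ : Set G)) {U : Set G} (hU : U ∈ 𝓝 1)
    (x : ℕ → G) : ∃ j k, j < k ∧ x k / x j ∈ U := by
  have hV : {p : G × G | p.2 / p.1 ∈ U} ∈ 𝓤 G := by
    rw [uniformity_eq_comap_nhds_one G]
    exact preimage_mem_comap hU
  exact hG.exists_lt_mem_of_forall_mem hV (fun _ ↦ Set.mem_univ _)

theorem TopIndep.exists_nhds_zero_forall_smul_mem {G ι : Type*} [AddCommGroup G]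
    [TopologicalSpace G] {A : Set G} (hA : TopIndep A) {W : Set G} (hW : W ∈ 𝓝 0) :
    ∃ U ∈ 𝓝 0, ∀ f : ι → G, Function.Injective f → (∀ i, f i ∈ A) →
      ∀ (I : Finset ι) (z : ι → ℤ), ∑ i ∈ I, z i • f i ∈ U → ∀ i ∈ I, z i • f i ∈ W := by
  classical
  obtain ⟨U, hU, hUW⟩ := hA.2 W hW
  refine ⟨U, hU, fun f hf hfA I z hsum i hi ↦ ?_⟩
  have : Nonempty ι := ⟨i⟩
  have hz (i : ι) : (z ∘ Function.invFun f) (f i) = z i :=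
    congrArg z (Function.leftInverse_invFun hf i)
  have hsumA : ∑ a ∈ I.image f, (z ∘ Function.invFun f) a • a ∈ U := by
    rwa [Finset.sum_image hf.injOn, Finset.sum_congr rfl fun i _ ↦ by rw [hz]]
  simpa only [hz] using
    hUW (I.image f) (by simp [Set.subset_def, hfA]) _ hsumA (f i) (Finset.mem_image_of_mem f hi)

theorem finite_support_of_continuous_char_general
    {G : Type*} [AddCommGroup G] [UniformSpace G] [IsUniformAddGroup G]
    (hpc : TotallyBounded (Set.univ : Set G))
    (A : Set G) (hA : TopIndep A)
    (χ : AddChar G Circle) (hχ : Continuous χ) :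
    {a ∈ A | χ a ≠ 1}.Finite := by
  by_contra hinf
  set e := Set.Infinite.natEmbedding _ hinf
  set a : ℕ → G := fun i ↦ e i
  choose m hm using fun i ↦ Circle.exists_pow_re_nonpos (e i).2.2
  set W := χ ⁻¹' {t | 0 < (t : ℂ).re}
  have hW : W ∈ 𝓝 0 :=
    ((isOpen_lt continuous_const (Complex.continuous_re.comp continuous_subtype_val)).preimage
      hχ).mem_nhds (show 0 < (χ 0 : ℂ).re by simp)
  obtain ⟨U, hU, hUW⟩ := hA.exists_nhds_zero_forall_smul_mem hW
  obtain ⟨j, k, hjk, hsub⟩ := exists_lt_sub_mem_of_totallyBounded_univ hpc hU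
    fun k ↦ ∑ i ∈ Finset.range k, (m i : ℤ) • a i
  rw [← Finset.sum_Ico_eq_sub _ hjk.le] at hsub
  have hmem : 0 < (χ ((m j : ℤ) • a j) : ℂ).re :=
    hUW a (Subtype.val_injective.comp e.injective) (fun i ↦ (e i).2.1) _ _ hsub j
      (Finset.left_mem_Ico.2 hjk)
  rw [AddChar.map_zsmul_eq_zpow, zpow_natCast] at hmem
  exact (hm j).not_gt hmem

/-- **Proposition**: if `A` is a topologically independent subset of a precompact Hausdorff
abelian topological group `G`, then every continuous character `χ : G → 𝕊` is finitely
`A`-supported, i.e. `supp_A(χ) = {a ∈ A : χ(a) ≠ 1}` is finite. -/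
theorem finite_support_of_continuous_char
    {G : Type*} [AddCommGroup G] [UniformSpace G] [IsUniformAddGroup G] [T2Space G]
    (hpc : TotallyBounded (Set.univ : Set G))
    (A : Set G) (hA : TopIndep A)
    (χ : AddChar G Circle) (hχ : Continuous χ) :
    {a ∈ A | χ a ≠ 1}.Finite :=
  finite_support_of_continuous_char_general hpc A hA χ hχ
end

section
/- Let G be a Hausdorff abelian topological group and let A be a set of nonzero elements of G. Then A is both topologically independent and absolutely Cauchy summable if and only if the topological subgroup ⟨A⟩ generated by A is the Tychonoff direct sum of the cyclic topological groups ⟨a⟩, a ∈ A; that is, if and only if the Kalton map κ_A : S_A → G is an injective group homomorphism and a homeomorphism onto its image ⟨A⟩. -/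
/-!
The argument compares two group topologies on `S_A`: the Tychonoff topology and the topology
pulled back from `G` along the Kalton map `κ`; an injective `κ` is an embedding exactly when their
neighbourhood filters of `0` agree. Absolute Cauchy summability says that `κ` is continuous at `0`:
a Tychonoff neighbourhood of `0` only constrains finitely many coordinates, and the rest of `κ x`
lies in `⟨A ∖ F⟩`. Topological independence says that the coordinate projections are
equicontinuous at `0` for the pulled-back topology, which gives the reverse comparison and, in a
`T₁` group, injectivity of `κ`. Conversely, when the two topologies agree, summability handles all
but finitely many coordinates at once, which makes the neighbourhood in the definition of
independence uniform in `a`.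
-/

open scoped DirectSum

/-- A subset `A` of a topological abelian group is *absolutely Cauchy summable*. -/
def AbsCauchySummable {G : Type*} [AddCommGroup G] [TopologicalSpace G] (A : Set G) : Prop :=
  ∀ U ∈ nhds (0 : G), ∃ F : Finset G, ↑F ⊆ A ∧
    (AddSubgroup.closure (A \ ↑F) : Set G) ⊆ U

/-- The Kalton map `κ_A : S_A = ⨁_{a ∈ A} ⟨a⟩ → G`, the unique group homomorphism extending
each inclusion `⟨a⟩ → G`. -/
noncomputable def kalton {G : Type*} [AddCommGroup G] (A : Set G) :
    (⨁ a : A, AddSubgroup.zmultiples a.1) →+ G :=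
  letI := Classical.decEq A
  DirectSum.toAddMonoid fun a => (AddSubgroup.zmultiples a.1).subtype

/-- The topology on `S_A = ⨁_{a ∈ A} ⟨a⟩` inherited from the Tychonoff product
`∏_{a ∈ A} ⟨a⟩`, each `⟨a⟩` carrying the subgroup topology from `G`. -/
def sumTop {G : Type*} [AddCommGroup G] [TopologicalSpace G] (A : Set G) :
    TopologicalSpace (⨁ a : A, AddSubgroup.zmultiples a.1) :=
  TopologicalSpace.induced (fun x a => x a) Pi.topologicalSpace

open Filter Topology AddSubgroup

section KaltonMap

variable {G : Type*} [AddCommGroup G] (A : Set G)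

local notation "𝒮" => ⨁ a : A, AddSubgroup.zmultiples (a : G)

theorem kalton_eq_toAddMonoid [DecidableEq A] :
    kalton A = DirectSum.toAddMonoid fun a : A => (zmultiples (a : G)).subtype := by
  obtain rfl : ‹DecidableEq A› = Classical.decEq A := Subsingleton.elim _ _
  rfl

theorem kalton_of [DecidableEq A] (a : A) (y : zmultiples (a : G)) :
    kalton A (DirectSum.of (fun a : A => zmultiples (a : G)) a y) = y := by
  rw [kalton_eq_toAddMonoid, DirectSum.toAddMonoid_of, AddSubgroup.coe_subtype]

theorem kalton_apply_of_support_subset (x : 𝒮) {s : Finset A} (hs : ∀ a ∉ s, x a = 0) :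
    kalton A x = ∑ a ∈ s, (x a : G) := by
  classical
  rw [kalton_eq_toAddMonoid, DirectSum.toAddMonoid, DFinsupp.liftAddHom_apply,
    DFinsupp.sumAddHom_apply, DFinsupp.sum_of_support_subset]
  · rfl
  · intro a ha
    by_contra h
    exact DFinsupp.mem_support_iff.1 ha (hs a h)
  · simp

theorem range_kalton : Set.range (kalton A) = (AddSubgroup.closure A : Set G) := by
  classical
  refine subset_antisymm ?_ fun g hg => ?_
  · rintro _ ⟨x, rfl⟩
    induction x using DirectSum.induction_on with
    | zero => simp
    | of a y =>
      rw [kalton_of]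
      exact zmultiples_le.2 (AddSubgroup.subset_closure a.2) y.2
    | add x y hx hy => rw [map_add]; exact add_mem hx hy
  · have hle : AddSubgroup.closure A ≤ (kalton A).range := (closure_le _).2 fun a ha =>
      ⟨DirectSum.of _ ⟨a, ha⟩ ⟨a, mem_zmultiples a⟩, kalton_of A _ _⟩
    exact hle hg

theorem closure_diff_subset_image_kalton (s : Finset A) :
    (AddSubgroup.closure (A \ s.map (Function.Embedding.subtype _)) : Set G) ⊆
      kalton A '' {x : 𝒮 | ∀ a ∈ s, x a = 0} := by
  classical
  let H : AddSubgroup 𝒮 := ⨅ a ∈ s, (DFinsupp.evalAddMonoidHom a : 𝒮 →+ _).ker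
  have hH : (H : Set 𝒮) = {x : 𝒮 | ∀ a ∈ s, x a = 0} := by
    ext x
    simp [H]
    rfl
  have hle : AddSubgroup.closure (A \ s.map (Function.Embedding.subtype _)) ≤ H.map (kalton A) := by
    refine (closure_le _).2 fun g ⟨hgA, hgs⟩ => ⟨DirectSum.of _ ⟨g, hgA⟩ ⟨g, mem_zmultiples g⟩,
      ?_, kalton_of A _ _⟩
    rw [hH]
    intro a ha
    refine DirectSum.of_eq_of_ne _ _ _ fun hag => hgs ?_
    subst hag
    exact Finset.mem_map_of_mem _ ha
  rw [← hH]
  exact hle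

theorem forall_sum_zsmul_mem_iff_forall_kalton_mem (U W : Set G) :
    (∀ B : Finset G, ↑B ⊆ A → ∀ z : G → ℤ, ∑ a ∈ B, z a • a ∈ U → ∀ a ∈ B, z a • a ∈ W) ↔
      ∀ x : 𝒮, kalton A x ∈ U → ∀ a, (x a : G) ∈ W := by
  classical
  refine ⟨fun h x hx a => ?_, fun h B hB z hz g hg => ?_⟩
  · choose z hz using fun a : A => mem_zmultiples_iff.1 (x a).2
    let z' := Function.extend Subtype.val z 0
    have hz' : ∀ a : A, z' a • (a : G) = x a := fun a => by
      simp only [z', Subtype.val_injective.extend_apply, hz]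
    have hsum : ∑ g ∈ (insert a x.support).map (Function.Embedding.subtype _), z' g • g =
        kalton A x := by
      rw [Finset.sum_map, kalton_apply_of_support_subset A x (s := insert a x.support)
        (by simp_all)]
      exact Finset.sum_congr rfl fun b _ => hz' b
    rw [← hz']
    exact h _ (by simp [Set.insert_subset_iff]) z' (hsum ▸ hx) _ (by simp)
  · let x : 𝒮 := ∑ a ∈ B.subtype (· ∈ A),
      DirectSum.of (fun a : A => zmultiples (a : G)) a ⟨z a • a, zsmul_mem_zmultiples _ _⟩
    have hκ : kalton A x = ∑ g ∈ B, z g • g := by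
      rw [map_sum, ← Finset.sum_subtype_of_mem _ hB]
      simp [kalton_of]
    have hxg : (x ⟨g, hB hg⟩ : G) = z g • g := by
      simp [x, DirectSum.of_apply, hg]
    simpa [hxg] using h x (hκ ▸ hz) ⟨g, hB hg⟩

variable [TopologicalSpace G]

local notation "𝓝ₛ" => @nhds 𝒮 (sumTop A) 0

theorem nhds_zero_sumTop : 𝓝ₛ = ⨅ a : A, comap (fun x : 𝒮 => (x a : G)) (𝓝 0) := by
  rw [sumTop, nhds_induced, nhds_pi, Filter.pi, comap_iInf]
  refine iInf_congr fun a => ?_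
  rw [nhds_subtype_eq_comap, comap_comap, comap_comap]
  rfl

theorem tendsto_sumTop_apply (a : A) : Tendsto (fun x : 𝒮 => (x a : G)) 𝓝ₛ (𝓝 0) := by
  rw [nhds_zero_sumTop]
  exact tendsto_iff_comap.2 (iInf_le _ a)

theorem isTopologicalAddGroup_sumTop [IsTopologicalAddGroup G] :
    @IsTopologicalAddGroup 𝒮 (sumTop A) _ :=
  topologicalAddGroup_induced (DFinsupp.coeFnAddMonoidHom : 𝒮 →+ _)

theorem exists_finset_of_mem_nhds_zero_sumTop {t : Set 𝒮} (ht : t ∈ 𝓝ₛ) :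
    ∃ s : Finset A, ∀ x : 𝒮, (∀ a ∈ s, x a = 0) → x ∈ t := by
  rw [nhds_zero_sumTop, mem_iInf] at ht
  obtain ⟨I, hI, V, hV, rfl⟩ := ht
  refine ⟨hI.toFinset, fun x hx => Set.mem_iInter.2 fun a => ?_⟩
  obtain ⟨W, hW, hWV⟩ := mem_comap.1 (hV a)
  apply hWV
  simp [hx a (hI.mem_toFinset.2 a.2), mem_of_mem_nhds hW]

theorem absCauchySummable_iff_tendsto_kalton [IsTopologicalAddGroup G] :
    AbsCauchySummable A ↔ Tendsto (kalton A) 𝓝ₛ (𝓝 0) := by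
  classical
  refine ⟨fun hsum U hU => ?_, fun hκ U hU => ?_⟩
  · obtain ⟨V, hV, hVU⟩ := exists_nhds_zero_half hU
    obtain ⟨F, -, hF⟩ := hsum V hV
    let E := F.subtype (· ∈ A)
    have hE : Tendsto (fun x : 𝒮 => ∑ a ∈ E, (x a : G)) 𝓝ₛ (𝓝 0) := by
      simpa using tendsto_finsetSum E fun a _ => tendsto_sumTop_apply A a
    refine (hE.eventually_mem hV).mono fun x hx => ?_
    have hsupp : ∀ a ∉ E ∪ (x.support \ E), x a = 0 := fun a ha => by simp_all
    rw [kalton_apply_of_support_subset A x hsupp, Finset.sum_union Finset.disjoint_sdiff]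
    refine hVU _ hx _ (hF (sum_mem fun a ha => ?_))
    have haF : (a : G) ∉ F := fun haF => (Finset.mem_sdiff.1 ha).2 (Finset.mem_subtype.2 haF)
    exact zmultiples_le.2 (AddSubgroup.subset_closure (Set.mem_sdiff_of_mem a.2 haF)) (x a).2
  · obtain ⟨s, hs⟩ := exists_finset_of_mem_nhds_zero_sumTop A (hκ hU)
    refine ⟨s.map (Function.Embedding.subtype _), by simp, ?_⟩
    rintro _ hg
    obtain ⟨x, hx, rfl⟩ := closure_diff_subset_image_kalton A s hg
    exact hs x hx

theorem topIndep_iff_forall_kalton_mem :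
    TopIndep A ↔ (0 : G) ∉ A ∧ ∀ W ∈ 𝓝 (0 : G), ∃ U ∈ 𝓝 (0 : G),
      ∀ x : 𝒮, kalton A x ∈ U → ∀ a, (x a : G) ∈ W := by
  simp only [TopIndep, forall_sum_zsmul_mem_iff_forall_kalton_mem]

variable {A}

theorem TopIndep.kalton_injective [T1Space G] (h : TopIndep A) :
    Function.Injective (kalton A) := by
  refine (injective_iff_map_eq_zero _).2 fun x hx => DFinsupp.ext fun a => ?_
  by_contra hne
  have hne' : (0 : G) ≠ x a := fun h0 => hne (Subtype.ext h0.symm)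
  obtain ⟨U, hU, hUW⟩ :=
    ((topIndep_iff_forall_kalton_mem A).1 h).2 _ (compl_singleton_mem_nhds hne')
  exact hUW x (hx ▸ mem_of_mem_nhds hU) a rfl

theorem TopIndep.comap_kalton_nhds_le (h : TopIndep A) : comap (kalton A) (𝓝 0) ≤ 𝓝ₛ := by
  rw [nhds_zero_sumTop]
  refine le_iInf fun a s hs => ?_
  obtain ⟨W, hW, hWs⟩ := mem_comap.1 hs
  obtain ⟨U, hU, hUW⟩ := ((topIndep_iff_forall_kalton_mem A).1 h).2 W hW
  exact mem_comap.2 ⟨U, hU, fun x hx => hWs (hUW x hx a)⟩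

theorem topIndep_of_comap_kalton_nhds_le (h0 : (0 : G) ∉ A) (hsum : AbsCauchySummable A)
    (hle : comap (kalton A) (𝓝 0) ≤ 𝓝ₛ) : TopIndep A := by
  classical
  refine (topIndep_iff_forall_kalton_mem A).2 ⟨h0, fun W hW => ?_⟩
  obtain ⟨F, -, hF⟩ := hsum W hW
  have hbox : ∀ᶠ x in 𝓝ₛ, ∀ a ∈ F.subtype (· ∈ A), (x a : G) ∈ W :=
    (eventually_all_finset _).2 fun a _ => tendsto_sumTop_apply A a hW
  obtain ⟨U, hU, hUW⟩ := mem_comap.1 (hle hbox)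
  refine ⟨U, hU, fun x hx a => ?_⟩
  by_cases ha : (a : G) ∈ F
  · exact hUW hx a (Finset.mem_subtype.2 ha)
  · exact hF <|
      zmultiples_le.2 (AddSubgroup.subset_closure (Set.mem_sdiff_of_mem a.2 ha)) (x a).2

end KaltonMap

/-- **Fact (DSS, Theorem 5.1)**: a set `A` of nonzero elements of a Hausdorff abelian
topological group is both topologically independent and absolutely Cauchy summable iff the
topological subgroup `⟨A⟩` is the Tychonoff direct sum of the cyclic topological groups `⟨a⟩`,
`a ∈ A`, i.e. iff the Kalton map is an injective homomorphism and a homeomorphism onto its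
image `⟨A⟩`. -/
theorem topIndep_and_absCauchySummable_iff_tychonoffDirectSum
    {G : Type*} [AddCommGroup G] [TopologicalSpace G] [IsTopologicalAddGroup G] [T2Space G]
    (A : Set G) (hA : ∀ a ∈ A, a ≠ 0) :
    (TopIndep A ∧ AbsCauchySummable A) ↔
      (Function.Injective (kalton A) ∧
       Set.range (kalton A) = (AddSubgroup.closure A : Set G) ∧
       (letI := sumTop A; Topology.IsEmbedding (kalton A))) := by
  let := sumTop A
  have := isTopologicalAddGroup_sumTop A
  constructor
  · rintro ⟨hind, hsum⟩
    have hinj := hind.kalton_injective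
    refine ⟨hinj, range_kalton A, ⟨?_, hinj⟩⟩
    refine IsTopologicalAddGroup.isInducing_iff_nhds_zero.2 (le_antisymm ?_ ?_)
    · exact ((absCauchySummable_iff_tendsto_kalton A).1 hsum).le_comap
    · exact hind.comap_kalton_nhds_le
  · rintro ⟨-, -, hemb⟩
    have hN := IsTopologicalAddGroup.isInducing_iff_nhds_zero.1 hemb.isInducing
    have hsum := (absCauchySummable_iff_tendsto_kalton A).2 (tendsto_iff_comap.2 hN.le)
    exact ⟨topIndep_of_comap_kalton_nhds_le (fun h => hA 0 h rfl) hsum hN.ge, hsum⟩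
end

section
/- Let A be an infinite independent subset of an abelian group G equipped with the discrete topology. Then A is topologically independent, but the topological subgroup ⟨A⟩ generated by A is not the Tychonoff direct sum of the cyclic topological groups ⟨a⟩, a ∈ A; that is, the Kalton map κ_A : S_A → G is not simultaneously an injective homomorphism and a homeomorphism onto its image ⟨A⟩. -/
open scoped DirectSum

/-- A subset `A` of nonzero elements of an abelian group is *independent*. -/
def Indep {G : Type*} [AddCommGroup G] (A : Set G) : Prop :=
  (0 : G) ∉ A ∧ ∀ B : Finset G, ↑B ⊆ A → ∀ z : G → ℤ,
    (∑ a ∈ B, z a • a) = 0 → ∀ a ∈ B, z a • a = 0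

/-!
In a discrete group `{0}` is a neighbourhood of `0`, so independence is already topological
independence. On the other hand a neighbourhood of `0` in the Tychonoff product restricts only
finitely many coordinates, so for infinitely many nontrivial factors the direct sum is not
discrete in the product topology; it therefore cannot embed into the discrete group `G`.
-/

open Topology

theorem Indep.topIndep {G : Type*} [AddCommGroup G] [TopologicalSpace G] [DiscreteTopology G]
    {A : Set G} (hA : Indep A) : TopIndep A := by
  refine ⟨hA.1, fun W hW => ⟨{0}, (isOpen_discrete _).mem_nhds rfl, ?_⟩⟩
  intro B hB z hz a ha
  rw [hA.2 B hB z hz a ha]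
  exact mem_of_mem_nhds hW

theorem DirectSum.not_discreteTopology_induced_pi {ι : Type*} [Infinite ι] {β : ι → Type*}
    [∀ i, AddCommMonoid (β i)] [∀ i, TopologicalSpace (β i)] [∀ i, Nontrivial (β i)] :
    ¬ @DiscreteTopology (⨁ i, β i) (.induced (fun x i => x i) Pi.topologicalSpace) := by
  classical
  let _ : TopologicalSpace (⨁ i, β i) := .induced (fun x i => x i) Pi.topologicalSpace
  intro _
  have hzero : ({0} : Set (⨁ i, β i)) ∈ 𝓝 0 := (isOpen_discrete _).mem_nhds rfl
  rw [nhds_induced, Filter.mem_comap] at hzero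
  obtain ⟨S, hS, hSzero⟩ := hzero
  rw [nhds_pi, Filter.mem_pi] at hS
  obtain ⟨I, hI, t, ht, hIt⟩ := hS
  obtain ⟨i, hi⟩ := hI.infinite_compl.nonempty
  obtain ⟨b, hb⟩ := exists_ne (0 : β i)
  have hof : DirectSum.of β i b ∈ ({0} : Set (⨁ i, β i)) := by
    refine hSzero (hIt fun j hj => ?_)
    show DirectSum.of β i b j ∈ t j
    rw [DirectSum.of_eq_of_ne _ _ _ (ne_of_mem_of_not_mem hj hi)]
    exact mem_of_mem_nhds (ht j)
  exact hb (DirectSum.of_injective i (by simpa using hof))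

theorem Indep.nontrivial_zmultiples {G : Type*} [AddCommGroup G] {A : Set G} (hA : Indep A)
    (a : A) : Nontrivial (AddSubgroup.zmultiples a.1) :=
  (AddSubgroup.nontrivial_iff_ne_bot _).2 <|
    AddSubgroup.zmultiples_eq_bot.not.2 fun h => hA.1 (h ▸ a.2)

/-- **Example**: an infinite independent subset `A` of a discrete abelian group is topologically
independent, yet `⟨A⟩` is not the Tychonoff direct sum of the cyclic groups `⟨a⟩`, `a ∈ A`:
the Kalton map is not simultaneously an injective homomorphism and a homeomorphism onto its
image. -/
theorem discrete_infinite_indep_not_tychonoffDirectSum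
    {G : Type*} [AddCommGroup G] [TopologicalSpace G] [DiscreteTopology G]
    (A : Set G) (hInf : A.Infinite) (hInd : Indep A) :
    TopIndep A ∧
      ¬ (Function.Injective (kalton A) ∧
         (letI := sumTop A; Topology.IsEmbedding (kalton A))) := by
  refine ⟨hInd.topIndep, fun ⟨_, hemb⟩ => ?_⟩
  have := hInf.to_subtype
  have := hInd.nontrivial_zmultiples
  let _ := sumTop A
  exact DirectSum.not_discreteTopology_induced_pi hemb.discreteTopology
end

section
/- Let G be a Hausdorff topological abelian group and let g be a nonzero topological generator of G (i.e., the cyclic subgroup ⟨g⟩ is dense in G). Then the singleton {g} is a maximal topologically independent subset of G: {g} is topologically independent, and no topologically independent subset of G properly contains {g}. -/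
/-!
If a topologically independent set contains `g ≠ h`, apply independence to the neighbourhood
`W = {-h}ᶜ` of `0`: the summand `(-1) • h` of `n • g - h` never lies in `W`, so `n • g - h`
stays outside a fixed neighbourhood `U` of `0`, i.e. `h` is not in the closure of `⟨g⟩`.
Density of `⟨g⟩` rules this out, and `{g}` itself is independent because `g ≠ 0`.
-/

open Topology

namespace TopIndep

variable {G : Type*} [AddCommGroup G] [TopologicalSpace G]

theorem singleton {a : G} (ha : a ≠ 0) : TopIndep {a} := by
  refine ⟨fun h0 => ha (Set.mem_singleton_iff.mp h0).symm, fun W hW => ⟨W, hW, ?_⟩⟩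
  intro B hB z hsum b hb
  obtain rfl : B = {a} := (Finset.subset_singleton_iff.mp (by exact_mod_cast hB)).resolve_left
    (Finset.ne_empty_of_mem hb)
  rw [Finset.sum_singleton] at hsum
  rwa [Finset.mem_singleton.mp hb]

theorem pair {A : Set G} (hA : TopIndep A) {a b : G} (ha : a ∈ A) (hb : b ∈ A) (hab : a ≠ b)
    {W : Set G} (hW : W ∈ 𝓝 0) :
    ∃ U ∈ 𝓝 (0 : G), ∀ m n : ℤ, m • a + n • b ∈ U → m • a ∈ W ∧ n • b ∈ W := by
  classical
  obtain ⟨U, hU, hsmul⟩ := hA.2 W hW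
  refine ⟨U, hU, fun m n hmn => ?_⟩
  have hsub : (({a, b} : Finset G) : Set G) ⊆ A := by
    simpa [Set.insert_subset_iff] using ⟨ha, hb⟩
  let z : G → ℤ := fun x => if x = a then m else n
  have hsum : ∑ x ∈ ({a, b} : Finset G), z x • x = m • a + n • b := by
    rw [Finset.sum_pair hab]
    simp [z, hab.symm]
  have hz := hsmul {a, b} hsub z (hsum ▸ hmn)
  exact ⟨by simpa [z] using hz a (by simp), by simpa [z, hab.symm] using hz b (by simp)⟩

theorem not_mem_closure_zmultiples [IsTopologicalAddGroup G] [T1Space G] {A : Set G}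
    (hA : TopIndep A) {g h : G} (hg : g ∈ A) (hh : h ∈ A) (hgh : g ≠ h) :
    h ∉ closure (AddSubgroup.zmultiples g : Set G) := by
  have hh0 : -h ≠ 0 := neg_ne_zero.mpr fun h0 => hA.1 (h0 ▸ hh)
  obtain ⟨U, hU, hsep⟩ := hA.pair hg hh hgh (compl_singleton_mem_nhds hh0.symm)
  have hUh : (· - h) ⁻¹' U ∈ 𝓝 h := (continuous_sub_right h).tendsto' h 0 (sub_self h) hU
  intro hcl
  obtain ⟨_, hnU, n, rfl⟩ := mem_closure_iff_nhds.mp hcl _ hUh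
  have hnU : n • g + (-1 : ℤ) • h ∈ U := by simpa [sub_eq_add_neg] using hnU
  exact (hsep n (-1) hnU).2 (by simp)

end TopIndep

/-- **Lemma**: if `g` is a nonzero topological generator of a Hausdorff topological abelian
group `G` (i.e. `⟨g⟩` is dense in `G`), then `{g}` is a maximal topologically independent
subset of `G`. -/
theorem singleton_topGenerator_maximal_topIndep
    {G : Type*} [AddCommGroup G] [TopologicalSpace G] [IsTopologicalAddGroup G] [T2Space G]
    (g : G) (hg : g ≠ 0) (hdense : Dense (AddSubgroup.zmultiples g : Set G)) :
    TopIndep {g} ∧ ∀ B : Set G, TopIndep B → ¬ ({g} ⊂ B) := by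
  refine ⟨TopIndep.singleton hg, fun B hB ⟨hgB, hne⟩ => ?_⟩
  obtain ⟨h, hhB, hhg⟩ := Set.not_subset.mp hne
  exact hB.not_mem_closure_zmultiples (hgB rfl) hhB (Ne.symm hhg) (hdense h)
end

section
/- There exist a compact Hausdorff abelian topological group G and non-torsion elements a, b, c of G such that neither {a, c} nor {b, c} is topologically independent, while {a, b} is topologically independent. -/
open Filter Topology

section TopIndep

variable {G H : Type*} [AddCommGroup G] [AddCommGroup H]

theorem not_topIndep_pair_of_tendsto [TopologicalSpace G] {x y : G} (hxy : x ≠ y) (u : ℕ → ℤ)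
    (h_sub : Tendsto (fun k => u k • (x - y)) atTop (𝓝 0))
    (h_left : ¬Tendsto (fun k => u k • x) atTop (𝓝 0)) : ¬TopIndep {x, y} := by
  rintro ⟨-, hind⟩
  obtain ⟨W, hW, h_out⟩ := not_tendsto_iff_exists_frequently_notMem.mp h_left
  obtain ⟨U, hU, hUW⟩ := hind W hW
  obtain ⟨k, hk_sub, hk_x⟩ := ((h_sub.eventually_mem hU).and_frequently h_out).exists
  classical
  let z : G → ℤ := fun g => if g = x then u k else -u k
  have hsum : ∑ g ∈ {x, y}, z g • g = u k • (x - y) := by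
    simp [z, Finset.sum_pair hxy, hxy.symm, sub_eq_add_neg]
  refine hk_x ?_
  simpa [z] using hUW {x, y} (by simp) z (hsum ▸ hk_sub) x (by simp)

theorem fst_sum_smul_of_subset_pair {x : G} {y : H} {B : Finset (G × H)}
    (hB : ↑B ⊆ ({(x, 0), (0, y)} : Set (G × H))) (hx : ((x, 0) : G × H) ∈ B) (z : G × H → ℤ) :
    (∑ a ∈ B, z a • a).1 = z (x, 0) • x := by
  rw [Prod.fst_sum, Finset.sum_eq_single_of_mem _ hx]
  · rfl
  · intro b hb hne
    rcases hB hb with rfl | rfl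
    · exact absurd rfl hne
    · simp

theorem snd_sum_smul_of_subset_pair {x : G} {y : H} {B : Finset (G × H)}
    (hB : ↑B ⊆ ({(x, 0), (0, y)} : Set (G × H))) (hy : ((0, y) : G × H) ∈ B) (z : G × H → ℤ) :
    (∑ a ∈ B, z a • a).2 = z (0, y) • y := by
  rw [Prod.snd_sum, Finset.sum_eq_single_of_mem _ hy]
  · rfl
  · intro b hb hne
    rcases hB hb with rfl | rfl
    · simp
    · exact absurd rfl hne

theorem topIndep_pair_inl_inr [TopologicalSpace G] [TopologicalSpace H] {x : G} {y : H}
    (hx : x ≠ 0) (hy : y ≠ 0) :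
    TopIndep ({(x, 0), (0, y)} : Set (G × H)) := by
  refine ⟨by simp [Prod.ext_iff, hx.symm, hy.symm], fun W hW => ?_⟩
  obtain ⟨W₁, hW₁, W₂, hW₂, hW⟩ := mem_nhds_prod_iff.mp hW
  refine ⟨W₁ ×ˢ W₂, prod_mem_nhds hW₁ hW₂, fun B hB z hsum g hg => hW ?_⟩
  rcases hB hg with rfl | rfl
  · exact ⟨by simpa [fst_sum_smul_of_subset_pair hB hg z] using hsum.1,
      by simpa using mem_of_mem_nhds hW₂⟩
  · exact ⟨by simpa using mem_of_mem_nhds hW₁,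
      by simpa [snd_sum_smul_of_subset_pair hB hg z] using hsum.2⟩

end TopIndep

namespace PadicInt

variable {p : ℕ} [Fact p.Prime]

theorem tendsto_pow_atTop_nhds_zero : Tendsto (fun k : ℕ => (p : ℤ_[p]) ^ k) atTop (𝓝 0) :=
  tendsto_pow_atTop_nhds_zero_of_norm_lt_one (norm_natCast_lt_one_iff.mpr dvd_rfl)

theorem not_tendsto_natCast_pow_atTop_nhds_zero {q : ℕ} (hq : ¬p ∣ q) :
    ¬Tendsto (fun k : ℕ => (q : ℤ_[p]) ^ k) atTop (𝓝 0) := by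
  rw [tendsto_zero_iff_norm_tendsto_zero]
  simp [hq]

variable {q : ℕ} [Fact q.Prime]

theorem not_topIndep_one_zero_one_one (hpq : p ≠ q) :
    ¬TopIndep ({(1, 0), (1, 1)} : Set (ℤ_[p] × ℤ_[q])) := by
  refine not_topIndep_pair_of_tendsto (by simp [Prod.ext_iff]) (fun k => (q : ℤ) ^ k) ?_ ?_
  · simpa [← Prod.zero_eq_mk] using
      (tendsto_const_nhds (x := (0 : ℤ_[p]))).prodMk_nhds (tendsto_pow_atTop_nhds_zero (p := q)).neg
  · intro h
    refine not_tendsto_natCast_pow_atTop_nhds_zero (p := p) (q := q) ?_ ?_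
    · exact (Nat.prime_dvd_prime_iff_eq Fact.out Fact.out).not.mpr hpq
    · simpa [Function.comp_def] using (continuous_fst.tendsto _).comp h

theorem not_topIndep_zero_one_one_one (hpq : p ≠ q) :
    ¬TopIndep ({(0, 1), (1, 1)} : Set (ℤ_[p] × ℤ_[q])) := by
  refine not_topIndep_pair_of_tendsto (by simp [Prod.ext_iff]) (fun k => (p : ℤ) ^ k) ?_ ?_
  · simpa [← Prod.zero_eq_mk] using
      (tendsto_pow_atTop_nhds_zero (p := p)).neg.prodMk_nhds (tendsto_const_nhds (x := (0 : ℤ_[q])))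
  · intro h
    refine not_tendsto_natCast_pow_atTop_nhds_zero (p := q) (q := p) ?_ ?_
    · exact (Nat.prime_dvd_prime_iff_eq Fact.out Fact.out).not.mpr hpq.symm
    · simpa [Function.comp_def] using (continuous_snd.tendsto _).comp h

end PadicInt

/-- **Example**: there are a compact Hausdorff abelian topological group `G` and non-torsion
elements `a, b, c ∈ G` such that neither `{a, c}` nor `{b, c}` is topologically independent,
while `{a, b}` is topologically independent. -/
theorem exists_compact_nonTorsion_topIndep_example :
    ∃ (G : Type) (_ : AddCommGroup G) (_ : TopologicalSpace G),
      IsTopologicalAddGroup G ∧ CompactSpace G ∧ T2Space G ∧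
      ∃ a b c : G,
        (∀ n : ℤ, n • a = 0 → n = 0) ∧
        (∀ n : ℤ, n • b = 0 → n = 0) ∧
        (∀ n : ℤ, n • c = 0 → n = 0) ∧
        ¬ TopIndep {a, c} ∧ ¬ TopIndep {b, c} ∧ TopIndep {a, b} := by
  have h23 : (2 : ℕ) ≠ 3 := by decide
  refine ⟨ℤ_[2] × ℤ_[3], inferInstance, inferInstance, inferInstance, inferInstance, inferInstance,
    (1, 0), (0, 1), (1, 1), ?_, ?_, ?_, PadicInt.not_topIndep_one_zero_one_one h23,
    PadicInt.not_topIndep_zero_one_one_one h23, topIndep_pair_inl_inr one_ne_zero one_ne_zero⟩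
  all_goals exact fun _ h => (smul_eq_zero.mp h).resolve_right (by simp [Prod.ext_iff])
end
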